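/- arXiv:1504.06079 — 2 statements merged into one kernel-verified Lean document; each statement's English description precedes it below -/
import Mathlib

section
/- Let w ∈ ℝ^v with w_u > 0 for all u and Σ_u w_u = 1, and set G = diag(diag(w)⁻¹, 0_{d×d}) ∈ ℝ^{(v+d)×(v+d)}, the block diagonal matrix with blocks diag(w)⁻¹ and the zero d × d matrix. A design ξ satisfies M(ξ) G K = K if and only if both (i) w is the treatment proportions design of ξ, i.e., Σ_{t∈T} ξ(u,t) = w_u for all u, and (ii) ξ is nuisance resistant for Q. -/
open Matrix Finset

noncomputable section

/-- An approximate design on `v` treatments and `n` nuisance conditions: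
nonnegative weights summing to one. -/
def IsDesign {v n : ℕ} (ξ : Fin v → Fin n → ℝ) : Prop :=
  (∀ u t, 0 ≤ ξ u t) ∧ ∑ u, ∑ t, ξ u t = 1

/-- The treatment proportions design of `ξ`: `(w_ξ)_u = ∑_t ξ(u,t)`. -/
def tpd {v n : ℕ} (ξ : Fin v → Fin n → ℝ) : Fin v → ℝ :=
  fun u => ∑ t, ξ u t

/-- The regression vector `f(u,t) = (e_uᵀ, h(t)ᵀ)ᵀ`. -/
def regvec {v n : ℕ} {ι : Type*} (h : Fin n → ι → ℝ) (u : Fin v) (t : Fin n) :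
    Fin v ⊕ ι → ℝ :=
  Sum.elim (fun i => if i = u then 1 else 0) (h t)

/-- The moment matrix `M(ξ) = ∑_{u,t} ξ(u,t) f(u,t) f(u,t)ᵀ`. -/
def momM {v n : ℕ} {ι : Type*} [Fintype ι] (h : Fin n → ι → ℝ)
    (ξ : Fin v → Fin n → ℝ) : Matrix (Fin v ⊕ ι) (Fin v ⊕ ι) ℝ :=
  ∑ u, ∑ t, ξ u t • vecMulVec (regvec h u t) (regvec h u t)

/-- The matrix `K = (Qᵀ, 0)ᵀ`. -/
def Kmat {v s : ℕ} (ι : Type*) (Q : Matrix (Fin v) (Fin s) ℝ) :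
    Matrix (Fin v ⊕ ι) (Fin s) ℝ :=
  Matrix.of fun i j => Sum.elim (fun a => Q a j) (fun _ => 0) i

/-- Feasibility of a design: the column space of `K` is contained in the
column space of `M(ξ)`. -/
def Feasible {v n s : ℕ} {ι : Type*} [Fintype ι] (h : Fin n → ι → ℝ)
    (Q : Matrix (Fin v) (Fin s) ℝ) (ξ : Fin v → Fin n → ℝ) : Prop :=
  LinearMap.range (Kmat ι Q).mulVecLin ≤ LinearMap.range (momM h ξ).mulVecLin

/-- `G` is a generalized inverse of `M`. -/
def IsGInv {ι : Type*} [Fintype ι] (M G : Matrix ι ι ℝ) : Prop :=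
  M * G * M = M

/-- Information matrix `N_Q(w) = (Qᵀ diag(w)⁻¹ Q)⁻¹` of a treatment
proportions design in the marginal model. -/
def NQ {v s : ℕ} (Q : Matrix (Fin v) (Fin s) ℝ) (w : Fin v → ℝ) :
    Matrix (Fin s) (Fin s) ℝ :=
  (Qᵀ * diagonal (fun u => (w u)⁻¹) * Q)⁻¹

/-- The matrix `H_ξ` whose `u`-th column is `(1/w_u) ∑_t ξ(u,t) h(t)`. -/
def Hmat {v n : ℕ} {ι : Type*} (h : Fin n → ι → ℝ) (ξ : Fin v → Fin n → ℝ) :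
    Matrix ι (Fin v) ℝ :=
  Matrix.of fun i u => (tpd ξ u)⁻¹ * ∑ t, ξ u t * h t i

/-- `ξ` is resistant to nuisance effects for the contrasts `Q`. -/
def NuisanceResistant {v n s : ℕ} {ι : Type*} (h : Fin n → ι → ℝ)
    (Q : Matrix (Fin v) (Fin s) ℝ) (ξ : Fin v → Fin n → ℝ) : Prop :=
  Hmat h ξ * Q = 0

/-- `ξ` is balanced: all columns of `H_ξ` coincide. -/
def BalancedDesign {v n : ℕ} {ι : Type*} (h : Fin n → ι → ℝ)
    (ξ : Fin v → Fin n → ℝ) : Prop :=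
  ∀ u u' : Fin v, (fun i => Hmat h ξ i u) = (fun i => Hmat h ξ i u')

/-!
In block form `M(ξ) = [[diag w_ξ, Bᵀ], [B, C]]`, where the `u`-th column of `B` is
`∑_t ξ(u,t) h(t)`, so `M(ξ) G K` stacks `diag(w_ξ) diag(w)⁻¹ Q` over `B diag(w)⁻¹ Q`.
Since no row of `Q` vanishes, the top block equals `Q` iff `w_ξ = w`; and then
`B diag(w)⁻¹ = H_ξ`, so the bottom block vanishes iff `ξ` is nuisance resistant.
-/

section Moments

variable {v n : ℕ} {ι : Type*}

def treatmentNuisanceMoment (h : Fin n → ι → ℝ) (ξ : Fin v → Fin n → ℝ) :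
    Matrix ι (Fin v) ℝ :=
  of fun i u => ∑ t, ξ u t * h t i

def nuisanceMoment (h : Fin n → ι → ℝ) (ξ : Fin v → Fin n → ℝ) : Matrix ι ι ℝ :=
  ∑ u, ∑ t, ξ u t • vecMulVec (h t) (h t)

theorem momM_eq_fromBlocks [Fintype ι] (h : Fin n → ι → ℝ) (ξ : Fin v → Fin n → ℝ) :
    momM h ξ = fromBlocks (diagonal (tpd ξ)) (treatmentNuisanceMoment h ξ)ᵀ
      (treatmentNuisanceMoment h ξ) (nuisanceMoment h ξ) := by
  ext (a | i) (b | k) <;>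
    simp [momM, nuisanceMoment, treatmentNuisanceMoment, regvec, tpd, diagonal_apply,
      Matrix.sum_apply, vecMulVec_apply]
  split_ifs with hab <;> simp [hab]

theorem Kmat_eq_fromRows {s : ℕ} (Q : Matrix (Fin v) (Fin s) ℝ) :
    Kmat ι Q = fromRows Q 0 := by
  ext (a | i) j <;> rfl

theorem Hmat_eq_mul_diagonal (h : Fin n → ι → ℝ) (ξ : Fin v → Fin n → ℝ) :
    Hmat h ξ = treatmentNuisanceMoment h ξ * diagonal fun u => (tpd ξ u)⁻¹ := by
  ext i u
  simp [Hmat, treatmentNuisanceMoment, mul_comm]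

end Moments

theorem Matrix.diagonal_mul_eq_self_iff {m l R : Type*} [Fintype m] [DecidableEq m]
    [Semiring R] [IsRightCancelMulZero R] {Q : Matrix m l R} (hQ : ∀ i, ∃ j, Q i j ≠ 0)
    (a : m → R) : diagonal a * Q = Q ↔ ∀ i, a i = 1 := by
  refine ⟨fun haQ i => ?_, fun ha => by simp [funext ha]⟩
  obtain ⟨j, hj⟩ := hQ i
  have := congrFun (congrFun haQ i) j
  rw [diagonal_mul] at this
  exact mul_right_cancel₀ hj (this.trans (one_mul _).symm)

theorem fromBlocks_mul_fromBlocks_mul_fromRows_zero {l m o R : Type*} [Fintype l] [Fintype m]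
    [Fintype o] [Semiring R] (A : Matrix l l R) (B : Matrix l m R) (C : Matrix m l R)
    (D : Matrix m m R) (E : Matrix l l R) (P : Matrix l o R) :
    fromBlocks A B C D * fromBlocks E 0 0 0 * fromRows P (0 : Matrix m o R) =
      fromRows (A * E * P) (C * E * P) := by
  simp [fromBlocks_multiply, fromBlocks_mul_fromRows]

theorem stmt2_general {v n d s : ℕ}
    (h : Fin n → Fin d → ℝ) (Q : Matrix (Fin v) (Fin s) ℝ)
    (hQrow : ∀ i, ∃ j, Q i j ≠ 0)
    (w : Fin v → ℝ) (hw : ∀ u, 0 < w u)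
    (ξ : Fin v → Fin n → ℝ)
    (G : Matrix (Fin v ⊕ Fin d) (Fin v ⊕ Fin d) ℝ)
    (hG : G = Matrix.fromBlocks (diagonal fun u => (w u)⁻¹) 0 0 0) :
    momM h ξ * G * Kmat (Fin d) Q = Kmat (Fin d) Q ↔
      ((∀ u, tpd ξ u = w u) ∧ NuisanceResistant h Q ξ) := by
  have htpd : diagonal (tpd ξ) * diagonal (fun u => (w u)⁻¹) * Q = Q ↔ ∀ u, tpd ξ u = w u := by
    rw [diagonal_mul_diagonal, diagonal_mul_eq_self_iff hQrow]
    exact forall_congr' fun u => mul_inv_eq_one₀ (hw u).ne'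
  rw [hG, momM_eq_fromBlocks, Kmat_eq_fromRows, fromBlocks_mul_fromBlocks_mul_fromRows_zero,
    fromRows_ext_iff, htpd]
  refine and_congr_right fun htw => ?_
  rw [NuisanceResistant, Hmat_eq_mul_diagonal, funext htw, Matrix.mul_assoc]

/-- With G = diag(diag(w)⁻¹, 0), a design ξ satisfies
M(ξ) G K = K iff (i) w is the treatment proportions design of ξ and
(ii) ξ is nuisance resistant for Q. -/
theorem stmt2 {v n d s : ℕ} (hv : 2 ≤ v)
    (h : Fin n → Fin d → ℝ) (Q : Matrix (Fin v) (Fin s) ℝ)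
    (hQc : ∀ j, ∑ i, Q i j = 0) (hQrow : ∀ i, ∃ j, Q i j ≠ 0)
    (w : Fin v → ℝ) (hw : ∀ u, 0 < w u) (hw1 : ∑ u, w u = 1)
    (ξ : Fin v → Fin n → ℝ) (hξ : IsDesign ξ)
    (G : Matrix (Fin v ⊕ Fin d) (Fin v ⊕ Fin d) ℝ)
    (hG : G = Matrix.fromBlocks (diagonal fun u => (w u)⁻¹) 0 0 0) :
    momM h ξ * G * Kmat (Fin d) Q = Kmat (Fin d) Q ↔
      ((∀ u, tpd ξ u = w u) ∧ NuisanceResistant h Q ξ) :=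
  stmt2_general h Q hQrow w hw ξ G hG

end
end

section
/- Assume Q has full column rank s, and let Φ : ℝ^{s×s} → ℝ be Loewner-isotone on positive semidefinite matrices (A ⪯ B implies Φ(A) ≤ Φ(B)). Let w* ∈ ℝ^v with all w*_u > 0 and Σ_u w*_u = 1 be Φ-optimal in the marginal model: Φ(N_Q(w*)) ≥ Φ(N_Q(w)) for every w ∈ ℝ^v with all w_u > 0 and Σ_u w_u = 1. Let ξ* be any design that is nuisance resistant for Q and whose treatment proportions design is w*. Then ξ* is feasible, (Kᵀ G* K)⁻¹ = N_Q(w*) for every generalized inverse G* of M(ξ*), and ξ* is Φ-optimal: Φ(N_Q(w*)) ≥ Φ((Kᵀ G K)⁻¹) for every feasible design ξ and every generalized inverse G of M(ξ). -/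
open Matrix Finset

noncomputable section

/-! ### Auxiliary lemmas for `stmt8` -/

section Stmt8Aux

variable {v n d s : ℕ}

private lemma cs_psd {ι : Type*} [Fintype ι] (A : Matrix ι ι ℝ)
    (hsym : ∀ y z : ι → ℝ, y ⬝ᵥ A *ᵥ z = z ⬝ᵥ A *ᵥ y)
    (hpos : ∀ x : ι → ℝ, 0 ≤ x ⬝ᵥ A *ᵥ x) (y z : ι → ℝ) :
    (y ⬝ᵥ A *ᵥ z)^2 ≤ (y ⬝ᵥ A *ᵥ y) * (z ⬝ᵥ A *ᵥ z) := by
  have key : ∀ t : ℝ, 0 ≤ (z ⬝ᵥ A *ᵥ z) * (t*t) + (2*(y ⬝ᵥ A *ᵥ z)) * t + (y ⬝ᵥ A *ᵥ y) := by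
    intro t
    have := hpos (y + t • z)
    simp only [mulVec_add, mulVec_smul, dotProduct_add, add_dotProduct, dotProduct_smul,
      smul_dotProduct, smul_eq_mul] at this
    rw [hsym z y] at this
    nlinarith [this]
  have hd := discrim_le_zero key
  rw [discrim] at hd
  nlinarith [hd]

private lemma dot_sym {ι : Type*} [Fintype ι] {A : Matrix ι ι ℝ} (hA : A.IsHermitian)
    (y z : ι → ℝ) : y ⬝ᵥ A *ᵥ z = z ⬝ᵥ A *ᵥ y := by
  rw [dotProduct_mulVec, ← mulVec_transpose, dotProduct_comm]
  congr 1
  rw [show Aᵀ = A from by rw [← conjTranspose_eq_transpose_of_trivial]; exact hA]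

private lemma inv_antitone (A B : Matrix (Fin s) (Fin s) ℝ)
    (hA : A.PosDef) (hBA : (B - A).PosSemidef) :
    B.PosDef ∧ (A⁻¹ - B⁻¹).PosSemidef := by
  have hAH : A.IsHermitian := hA.isHermitian
  have hBH : B.IsHermitian := by
    rw [show B = (B - A) + A from (sub_add_cancel B A).symm]
    exact hBA.isHermitian.add hAH
  have hB : B.PosDef := by
    refine posDef_iff_dotProduct_mulVec.2 ⟨hBH, fun x hx => ?_⟩
    have h1 := (posSemidef_iff_dotProduct_mulVec.1 hBA).2 x
    have h2 := (posDef_iff_dotProduct_mulVec.1 hA).2 hx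
    simp only [sub_mulVec, dotProduct_sub] at h1
    simp only [star_trivial] at *
    linarith
  refine ⟨hB, ?_⟩
  have hAinv : A⁻¹.PosDef := hA.inv
  have hBinv : B⁻¹.PosDef := hB.inv
  refine posSemidef_iff_dotProduct_mulVec.2 ⟨hAinv.isHermitian.sub hBinv.isHermitian, fun x => ?_⟩
  simp only [star_trivial, sub_mulVec, dotProduct_sub, sub_nonneg]
  set y := B⁻¹ *ᵥ x with hy
  set z := A⁻¹ *ᵥ x with hz
  have hAz : A *ᵥ z = x := by
    rw [hz, mulVec_mulVec, Matrix.mul_nonsing_inv _ hA.det_pos.ne'.isUnit, one_mulVec]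
  have hsymA := dot_sym hAH
  have hposA : ∀ w : Fin s → ℝ, 0 ≤ w ⬝ᵥ A *ᵥ w := fun w => by
    simpa using (posSemidef_iff_dotProduct_mulVec.1 hA.posSemidef).2 w
  have hcs := cs_psd A hsymA hposA y z
  have e1 : y ⬝ᵥ A *ᵥ z = x ⬝ᵥ B⁻¹ *ᵥ x := by
    rw [hAz, dotProduct_comm]
  have hBx : B *ᵥ y = x := by
    rw [hy, mulVec_mulVec, Matrix.mul_nonsing_inv _ hB.det_pos.ne'.isUnit, one_mulVec]
  have e2 : y ⬝ᵥ A *ᵥ y ≤ y ⬝ᵥ B *ᵥ y := by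
    have := (posSemidef_iff_dotProduct_mulVec.1 hBA).2 y
    simp only [star_trivial, sub_mulVec, dotProduct_sub] at this
    linarith
  have e3 : y ⬝ᵥ B *ᵥ y = x ⬝ᵥ B⁻¹ *ᵥ x := by
    rw [hBx, dotProduct_comm]
  have e4 : z ⬝ᵥ A *ᵥ z = x ⬝ᵥ A⁻¹ *ᵥ x := by
    rw [hAz, dotProduct_comm]
  have c0 : 0 ≤ x ⬝ᵥ B⁻¹ *ᵥ x := by simpa using (posSemidef_iff_dotProduct_mulVec.1 hBinv.posSemidef).2 x
  have d0 : 0 ≤ x ⬝ᵥ A⁻¹ *ᵥ x := by simpa using (posSemidef_iff_dotProduct_mulVec.1 hAinv.posSemidef).2 x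
  rcases c0.eq_or_lt with hc | hc
  · linarith
  · nlinarith [hcs, e1, e2, e3, e4]

private lemma momM_apply (h : Fin n → Fin d → ℝ) (ξ : Fin v → Fin n → ℝ) (i k : Fin v ⊕ Fin d) :
    momM h ξ i k = ∑ u, ∑ t, ξ u t * (regvec h u t i * regvec h u t k) := by
  simp [momM, Matrix.sum_apply, vecMulVec_apply, mul_assoc]

private lemma momM_mulVec (h : Fin n → Fin d → ℝ) (ξ : Fin v → Fin n → ℝ)
    (x : Fin v ⊕ Fin d → ℝ) (i : Fin v ⊕ Fin d) :
    (momM h ξ *ᵥ x) i = ∑ u, ∑ t, ξ u t * regvec h u t i * (regvec h u t ⬝ᵥ x) := by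
  simp only [mulVec, dotProduct, momM_apply, Finset.sum_mul]
  rw [Finset.sum_comm]
  refine Finset.sum_congr rfl fun u _ => ?_
  rw [Finset.sum_comm]
  refine Finset.sum_congr rfl fun t _ => ?_
  rw [Finset.mul_sum]
  exact Finset.sum_congr rfl fun k _ => by ring

private lemma momM_dot (h : Fin n → Fin d → ℝ) (ξ : Fin v → Fin n → ℝ) (x : Fin v ⊕ Fin d → ℝ) :
    x ⬝ᵥ momM h ξ *ᵥ x = ∑ u, ∑ t, ξ u t * (regvec h u t ⬝ᵥ x)^2 := by
  simp only [dotProduct, momM_mulVec, Finset.mul_sum]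
  rw [Finset.sum_comm]
  refine Finset.sum_congr rfl fun u _ => ?_
  rw [Finset.sum_comm]
  refine Finset.sum_congr rfl fun t _ => ?_
  rw [pow_two, Finset.sum_mul_sum, Finset.mul_sum]
  refine Finset.sum_congr rfl fun k _ => ?_
  rw [Finset.mul_sum]
  exact Finset.sum_congr rfl fun i _ => by ring

private lemma momM_herm (h : Fin n → Fin d → ℝ) (ξ : Fin v → Fin n → ℝ) :
    (momM h ξ).IsHermitian := by
  refine Matrix.IsHermitian.ext fun i j => ?_
  simp only [momM_apply, star_trivial]
  exact Finset.sum_congr rfl fun u _ => Finset.sum_congr rfl fun t _ => by ring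

private lemma momM_transpose (h : Fin n → Fin d → ℝ) (ξ : Fin v → Fin n → ℝ) :
    (momM h ξ)ᵀ = momM h ξ := by
  rw [← conjTranspose_eq_transpose_of_trivial]
  exact (momM_herm h ξ).eq

private lemma momM_inl_inl (h : Fin n → Fin d → ℝ) (ξ : Fin v → Fin n → ℝ) (a b : Fin v) :
    momM h ξ (Sum.inl a) (Sum.inl b) = if a = b then tpd ξ a else 0 := by
  simp only [momM_apply, regvec, Sum.elim_inl]
  rcases eq_or_ne a b with rfl | hab
  · rw [if_pos rfl, Finset.sum_eq_single a]
    · simp [tpd]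
    · intro u _ hu
      exact Finset.sum_eq_zero fun t _ => by simp [Ne.symm hu]
    · simp
  · rw [if_neg hab]
    refine Finset.sum_eq_zero fun u _ => Finset.sum_eq_zero fun t _ => ?_
    rcases eq_or_ne a u with rfl | h1
    · rw [if_neg (fun hh : b = a => hab hh.symm)]; ring
    · rw [if_neg h1]; ring

private lemma momM_inl_inr (h : Fin n → Fin d → ℝ) (ξ : Fin v → Fin n → ℝ) (a : Fin v) (i : Fin d) :
    momM h ξ (Sum.inl a) (Sum.inr i) = ∑ t, ξ a t * h t i := by
  simp only [momM_apply, regvec, Sum.elim_inl, Sum.elim_inr]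
  rw [Finset.sum_eq_single a]
  · exact Finset.sum_congr rfl fun t _ => by simp
  · intro u _ hu
    exact Finset.sum_eq_zero fun t _ => by simp [Ne.symm hu]
  · intro habs; exact absurd (Finset.mem_univ a) habs

private lemma momM_inr_inl (h : Fin n → Fin d → ℝ) (ξ : Fin v → Fin n → ℝ) (a : Fin v) (i : Fin d) :
    momM h ξ (Sum.inr i) (Sum.inl a) = ∑ t, ξ a t * h t i := by
  rw [← momM_inl_inr h ξ a i, momM_apply, momM_apply]
  exact Finset.sum_congr rfl fun u _ => Finset.sum_congr rfl fun t _ => by ring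

private lemma momM_mulVec_inl (h : Fin n → Fin d → ℝ) (ξ : Fin v → Fin n → ℝ)
    (x : Fin v ⊕ Fin d → ℝ) (a : Fin v) :
    (momM h ξ *ᵥ x) (Sum.inl a) = ∑ t, ξ a t * (regvec h a t ⬝ᵥ x) := by
  rw [momM_mulVec]
  rw [Finset.sum_eq_single a]
  · refine Finset.sum_congr rfl fun t _ => ?_
    simp [regvec]
  · intro u _ hu
    refine Finset.sum_eq_zero fun t _ => ?_
    rw [show regvec h u t (Sum.inl a) = 0 from by simp [regvec, Ne.symm hu]]
    ring
  · intro habs; exact absurd (Finset.mem_univ a) habs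

/-- The auxiliary matrix `Z_w = (diag(w)⁻¹ Q ; 0)`. -/
private def Zm (Q : Matrix (Fin v) (Fin s) ℝ) (w : Fin v → ℝ) :
    Matrix (Fin v ⊕ Fin d) (Fin s) ℝ :=
  Matrix.of fun i j => Sum.elim (fun a => (w a)⁻¹ * Q a j) (fun _ => (0:ℝ)) i

/-- The auxiliary matrix `W = diag(diag(w)⁻¹, 0)`. -/
private def Wm (w : Fin v → ℝ) : Matrix (Fin v ⊕ Fin d) (Fin v ⊕ Fin d) ℝ :=
  Matrix.of fun i k =>
    Sum.elim (fun a => Sum.elim (fun b => if a = b then (w a)⁻¹ else (0:ℝ))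
      (fun _ => (0:ℝ)) k) (fun _ => (0:ℝ)) i

private lemma momM_mul_Z (h : Fin n → Fin d → ℝ) (Q : Matrix (Fin v) (Fin s) ℝ)
    (ξ : Fin v → Fin n → ℝ) (hres : NuisanceResistant h Q ξ)
    (hw : ∀ u, 0 < tpd ξ u) :
    momM h ξ * Zm (d := d) Q (tpd ξ) = Kmat (Fin d) Q := by
  ext i j
  rw [Matrix.mul_apply, Fintype.sum_sum_type]
  simp only [Zm, Matrix.of_apply, Sum.elim_inl, Sum.elim_inr, mul_zero, Finset.sum_const_zero,
    add_zero]
  cases i with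
  | inl a =>
    rw [Finset.sum_eq_single a]
    · rw [momM_inl_inl, if_pos rfl]
      show tpd ξ a * ((tpd ξ a)⁻¹ * Q a j) = Q a j
      rw [← mul_assoc, mul_inv_cancel₀ (hw a).ne', one_mul]
    · intro b _ hb
      rw [momM_inl_inl, if_neg (Ne.symm hb), zero_mul]
    · intro habs; exact absurd (Finset.mem_univ a) habs
  | inr i =>
    have hHQ := congrFun (congrFun hres i) j
    simp only [Matrix.mul_apply, Hmat, Matrix.of_apply, Matrix.zero_apply] at hHQ
    calc ∑ b, momM h ξ (Sum.inr i) (Sum.inl b) * ((tpd ξ b)⁻¹ * Q b j)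
        = ∑ b, (tpd ξ b)⁻¹ * (∑ t, ξ b t * h t i) * Q b j := by
          refine Finset.sum_congr rfl fun b _ => ?_
          rw [momM_inr_inl]; ring
      _ = 0 := hHQ
      _ = Kmat (Fin d) Q (Sum.inr i) j := by simp [Kmat]

private lemma ginv_sandwich {I J : Type*} [Fintype I] [Fintype J]
    (M G : Matrix I I ℝ) (Z : Matrix I J ℝ) (hM : Mᵀ = M) (hG : M * G * M = M) :
    (M * Z)ᵀ * G * (M * Z) = Zᵀ * (M * Z) := by
  rw [Matrix.transpose_mul, hM]
  calc Zᵀ * M * G * (M * Z) = Zᵀ * (M * G * M) * Z := by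
        simp only [Matrix.mul_assoc]
    _ = Zᵀ * (M * Z) := by rw [hG, Matrix.mul_assoc]

private lemma ZtK (Q : Matrix (Fin v) (Fin s) ℝ) (w : Fin v → ℝ) :
    (Zm (d := d) Q w)ᵀ * Kmat (Fin d) Q = Qᵀ * diagonal (fun u => (w u)⁻¹) * Q := by
  ext j j'
  rw [Matrix.mul_apply, Fintype.sum_sum_type]
  simp only [Zm, Kmat, Matrix.transpose_apply, Matrix.of_apply, Sum.elim_inl, Sum.elim_inr,
    zero_mul, Finset.sum_const_zero, add_zero]
  rw [Matrix.mul_apply]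
  refine Finset.sum_congr rfl fun a _ => ?_
  rw [Matrix.mul_diagonal, Matrix.transpose_apply]
  ring

private lemma KWK (Q : Matrix (Fin v) (Fin s) ℝ) (w : Fin v → ℝ) :
    (Kmat (Fin d) Q)ᵀ * Wm (d := d) w * Kmat (Fin d) Q = Qᵀ * diagonal (fun u => (w u)⁻¹) * Q := by
  have hWK : Wm (d := d) w * Kmat (Fin d) Q = Zm (d := d) Q w := by
    ext i j
    rw [Matrix.mul_apply, Fintype.sum_sum_type]
    cases i with
    | inl a =>
      simp only [Wm, Kmat, Zm, Matrix.of_apply, Sum.elim_inl, Sum.elim_inr, mul_zero,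
        Finset.sum_const_zero, add_zero]
      rw [Finset.sum_eq_single a]
      · rw [if_pos rfl]
      · intro b _ hb; rw [if_neg (Ne.symm hb), zero_mul]
      · intro habs; exact absurd (Finset.mem_univ a) habs
    | inr i =>
      simp [Wm, Kmat, Zm]
  rw [Matrix.mul_assoc, hWK]
  have := ZtK (d := d) Q w
  rw [← this]
  ext j j'
  rw [Matrix.mul_apply, Matrix.mul_apply]
  refine Finset.sum_congr rfl fun k _ => ?_
  cases k with
  | inl a => simp [Zm, Kmat]; ring
  | inr i => simp [Zm, Kmat]

private lemma Wm_transpose (w : Fin v → ℝ) : (Wm (d := d) w)ᵀ = Wm w := by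
  ext i k
  cases i <;> cases k <;> simp [Wm, Matrix.transpose_apply]
  rename_i a b
  rcases eq_or_ne a b with rfl | hab
  · simp
  · rw [if_neg hab, if_neg (Ne.symm hab)]

private lemma sub_MWM_psd (h : Fin n → Fin d → ℝ) (ξ : Fin v → Fin n → ℝ)
    (hξ : IsDesign ξ) (hw : ∀ u, 0 < tpd ξ u) :
    (momM h ξ - momM h ξ * Wm (d := d) (tpd ξ) * momM h ξ).PosSemidef := by
  set M := momM h ξ with hM
  have hMt : Mᵀ = M := momM_transpose h ξ
  rw [posSemidef_iff_dotProduct_mulVec]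
  constructor
  · show (M - M * Wm (d := d) (tpd ξ) * M)ᴴ = M - M * Wm (d := d) (tpd ξ) * M
    rw [conjTranspose_sub, conjTranspose_mul, conjTranspose_mul]
    simp only [conjTranspose_eq_transpose_of_trivial]
    rw [hMt, Wm_transpose]
    simp only [Matrix.mul_assoc]
  · intro x
    rw [star_trivial, sub_mulVec, dotProduct_sub, sub_nonneg]
    have hsplit : (M * Wm (d := d) (tpd ξ) * M) *ᵥ x = M *ᵥ (Wm (d := d) (tpd ξ) *ᵥ (M *ᵥ x)) := by
      rw [← Matrix.mulVec_mulVec, ← Matrix.mulVec_mulVec]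
    set y := M *ᵥ x with hy
    have hvm : x ᵥ* M = y := by
      rw [hy, ← hMt, vecMul_transpose, hMt]
    have hdot : x ⬝ᵥ (M * Wm (d := d) (tpd ξ) * M) *ᵥ x
        = ∑ u, (tpd ξ u)⁻¹ * (y (Sum.inl u))^2 := by
      rw [hsplit, dotProduct_mulVec, hvm]
      have hWy : ∀ a, (Wm (d := d) (tpd ξ) *ᵥ y) (Sum.inl a) = (tpd ξ a)⁻¹ * y (Sum.inl a) := by
        intro a
        rw [mulVec, dotProduct, Fintype.sum_sum_type]
        simp only [Wm, Matrix.of_apply, Sum.elim_inl, Sum.elim_inr, zero_mul,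
          Finset.sum_const_zero, add_zero]
        rw [Finset.sum_eq_single a]
        · rw [if_pos rfl]
        · intro b _ hb; rw [if_neg (Ne.symm hb), zero_mul]
        · intro habs; exact absurd (Finset.mem_univ a) habs
      have hWy' : ∀ i, (Wm (d := d) (tpd ξ) *ᵥ y) (Sum.inr i) = 0 := fun i => by
        simp [Wm, mulVec, dotProduct]
      rw [dotProduct, Fintype.sum_sum_type]
      simp only [hWy, hWy', mul_zero, Finset.sum_const_zero, add_zero]
      exact Finset.sum_congr rfl fun a _ => by ring
    rw [momM_dot, hdot]
    apply Finset.sum_le_sum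
    intro u _
    rw [hy, momM_mulVec_inl]
    have hcs := Finset.sum_sq_le_sum_mul_sum_of_sq_eq_mul Finset.univ
      (r := fun t => ξ u t * (regvec h u t ⬝ᵥ x)) (f := fun t => ξ u t)
      (g := fun t => ξ u t * (regvec h u t ⬝ᵥ x)^2)
      (fun t _ => hξ.1 u t) (fun t _ => mul_nonneg (hξ.1 u t) (sq_nonneg _))
      (fun t _ => by ring)
    calc (tpd ξ u)⁻¹ * (∑ t, ξ u t * (regvec h u t ⬝ᵥ x))^2
        ≤ (tpd ξ u)⁻¹ * ((tpd ξ u) * ∑ t, ξ u t * (regvec h u t ⬝ᵥ x)^2) :=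
          mul_le_mul_of_nonneg_left hcs (inv_nonneg.2 (hw u).le)
      _ = ∑ t, ξ u t * (regvec h u t ⬝ᵥ x)^2 := by
          rw [← mul_assoc, inv_mul_cancel₀ (hw u).ne', one_mul]

private lemma Amat_posdef (Q : Matrix (Fin v) (Fin s) ℝ) (hQrank : Q.rank = s)
    (w : Fin v → ℝ) (hw : ∀ u, 0 < w u) :
    (Qᵀ * diagonal (fun u => (w u)⁻¹) * Q).PosDef := by
  have hinj : Function.Injective Q.mulVecLin := by
    rw [← LinearMap.ker_eq_bot]
    have h1 := Q.mulVecLin.finrank_range_add_finrank_ker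
    rw [show Module.finrank ℝ (LinearMap.range Q.mulVecLin) = s from hQrank] at h1
    simp only [Module.finrank_pi, Fintype.card_fin] at h1
    exact Submodule.finrank_eq_zero.1 (by omega)
  refine posDef_iff_dotProduct_mulVec.2 ⟨?_, fun x hx => ?_⟩
  · rw [← conjTranspose_eq_transpose_of_trivial]
    exact isHermitian_conjTranspose_mul_mul Q (isHermitian_diagonal _)
  · have hQx : Q *ᵥ x ≠ 0 := by
      intro hz
      exact hx (hinj (show Q.mulVecLin x = Q.mulVecLin 0 by simpa [mulVecLin_apply] using hz))
    have he : star x ⬝ᵥ (Qᵀ * diagonal (fun u => (w u)⁻¹) * Q) *ᵥ x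
        = ∑ a, (w a)⁻¹ * ((Q *ᵥ x) a)^2 := by
      rw [star_trivial, ← mulVec_mulVec, ← mulVec_mulVec, dotProduct_mulVec, vecMul_transpose]
      simp only [dotProduct, mulVec_diagonal]
      exact Finset.sum_congr rfl fun a _ => by ring
    rw [he]
    obtain ⟨a, ha⟩ := Function.ne_iff.1 hQx
    refine Finset.sum_pos' (fun b _ => mul_nonneg (inv_nonneg.2 (hw b).le) (sq_nonneg _))
      ⟨a, Finset.mem_univ a, mul_pos (inv_pos.2 (hw a)) (pow_two_pos_of_ne_zero (by simpa using ha))⟩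

end Stmt8Aux

/-- If w* is a Φ-optimal treatment proportions design in the
marginal model (Φ Loewner-isotone) and ξ* is any nuisance resistant design
with treatment proportions w*, then ξ* is feasible, its information matrix
(KᵀG*K)⁻¹ equals N_Q(w*) for every generalized inverse G* of M(ξ*), and ξ*
is Φ-optimal in the model with nuisance effects. -/
theorem stmt8 {v n d s : ℕ} (hv : 2 ≤ v)
    (h : Fin n → Fin d → ℝ) (Q : Matrix (Fin v) (Fin s) ℝ)
    (hQc : ∀ j, ∑ i, Q i j = 0) (hQrow : ∀ i, ∃ j, Q i j ≠ 0)
    (hQrank : Q.rank = s)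
    (Φ : Matrix (Fin s) (Fin s) ℝ → ℝ)
    (hiso : ∀ A B : Matrix (Fin s) (Fin s) ℝ,
      A.PosSemidef → B.PosSemidef → (B - A).PosSemidef → Φ A ≤ Φ B)
    (wstar : Fin v → ℝ) (hws : ∀ u, 0 < wstar u) (hws1 : ∑ u, wstar u = 1)
    (hopt : ∀ w : Fin v → ℝ, (∀ u, 0 < w u) → ∑ u, w u = 1 →
      Φ (NQ Q w) ≤ Φ (NQ Q wstar))
    (ξs : Fin v → Fin n → ℝ) (hξs : IsDesign ξs)
    (hres : NuisanceResistant h Q ξs) (htp : tpd ξs = wstar) :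
    Feasible h Q ξs ∧
    (∀ Gs, IsGInv (momM h ξs) Gs →
      ((Kmat (Fin d) Q)ᵀ * Gs * Kmat (Fin d) Q)⁻¹ = NQ Q wstar) ∧
    (∀ ξ, IsDesign ξ → Feasible h Q ξ → ∀ G, IsGInv (momM h ξ) G →
      Φ (((Kmat (Fin d) Q)ᵀ * G * Kmat (Fin d) Q)⁻¹) ≤ Φ (NQ Q wstar)) := by
    -- treatment proportions of ξs are positive
    have hwspos : ∀ u, 0 < tpd ξs u := fun u => htp ▸ hws u
    have hMZ : momM h ξs * Zm (d := d) Q (tpd ξs) = Kmat (Fin d) Q :=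
      momM_mul_Z h Q ξs hres hwspos
    have hfeas : Feasible h Q ξs := by
      rintro y ⟨x, rfl⟩
      refine ⟨Zm Q (tpd ξs) *ᵥ x, ?_⟩
      simp only [mulVecLin_apply]
      rw [Matrix.mulVec_mulVec, hMZ]
    refine ⟨hfeas, ?_, ?_⟩
    · -- part 2
      intro Gs hGs
      have hsand := ginv_sandwich (momM h ξs) Gs (Zm Q (tpd ξs)) (momM_transpose h ξs) hGs
      rw [hMZ] at hsand
      rw [hsand, ZtK, htp]
      rfl
    · -- part 3
      intro ξ hξ hfe G hG
      -- positivity of treatment proportions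
      have hwpos : ∀ u, 0 < tpd ξ u := by
        intro u
        by_contra hu
        have hw0 : tpd ξ u = 0 :=
          le_antisymm (not_lt.1 hu) (Finset.sum_nonneg fun t _ => hξ.1 u t)
        have hxt : ∀ t, ξ u t = 0 := fun t =>
          (Finset.sum_eq_zero_iff_of_nonneg (fun t _ => hξ.1 u t)).1 hw0 t (Finset.mem_univ t)
        obtain ⟨j0, hj0⟩ := hQrow u
        obtain ⟨x, hx⟩ := hfe ⟨Pi.single j0 1, rfl⟩
        have h1 : (momM h ξ *ᵥ x) (Sum.inl u) = 0 := by
          rw [momM_mulVec_inl]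
          exact Finset.sum_eq_zero fun t _ => by rw [hxt t, zero_mul]
        have h2 : ((Kmat (Fin d) Q).mulVecLin (Pi.single j0 1)) (Sum.inl u) = Q u j0 := by
          simp [mulVecLin_apply, Kmat]
        apply hj0
        rw [← h2, ← hx]
        simpa only [mulVecLin_apply] using h1
      -- the matrix U with momM * U = Kmat
      have hcol : ∀ j, ∃ x : Fin v ⊕ Fin d → ℝ,
          momM h ξ *ᵥ x = fun i => Kmat (Fin d) Q i j := by
        intro j
        obtain ⟨x, hx⟩ := hfe ⟨Pi.single j 1, rfl⟩
        refine ⟨x, ?_⟩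
        simp only [mulVecLin_apply] at hx
        rw [hx]
        funext i
        simp
      set U : Matrix (Fin v ⊕ Fin d) (Fin s) ℝ :=
        Matrix.of fun k j => Classical.choose (hcol j) k with hU
      have hMU : momM h ξ * U = Kmat (Fin d) Q := by
        ext i j
        have := congrFun (Classical.choose_spec (hcol j)) i
        simpa [Matrix.mul_apply, mulVec, dotProduct, hU] using this
      set A : Matrix (Fin s) (Fin s) ℝ :=
        Qᵀ * diagonal (fun u => (tpd ξ u)⁻¹) * Q with hA
      have hApd : A.PosDef := Amat_posdef Q hQrank (tpd ξ) hwpos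
      have hsand := ginv_sandwich (momM h ξ) G U (momM_transpose h ξ) hG
      rw [hMU] at hsand
      -- hsand : Kᵀ * G * K = Uᵀ * Kmat
      have hdiffeq : Uᵀ * Kmat (Fin d) Q - A
          = Uᵀ * (momM h ξ - momM h ξ * Wm (d := d) (tpd ξ) * momM h ξ) * U := by
        rw [Matrix.mul_sub, Matrix.sub_mul]
        congr 1
        · rw [← hMU, Matrix.mul_assoc]
        · rw [hA, ← KWK (d := d) Q (tpd ξ), ← hMU, Matrix.transpose_mul, momM_transpose]
          simp only [Matrix.mul_assoc]
      have hpsd : (Uᵀ * Kmat (Fin d) Q - A).PosSemidef := by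
        rw [hdiffeq]
        have := (sub_MWM_psd h ξ hξ hwpos).conjTranspose_mul_mul_same U
        rwa [conjTranspose_eq_transpose_of_trivial] at this
      obtain ⟨hBpd, hinvdiff⟩ := inv_antitone A (Uᵀ * Kmat (Fin d) Q) hApd hpsd
      rw [hsand]
      have hsum1 : ∑ u, tpd ξ u = 1 := hξ.2
      calc Φ ((Uᵀ * Kmat (Fin d) Q)⁻¹)
          ≤ Φ (A⁻¹) := hiso _ _ hBpd.inv.posSemidef hApd.inv.posSemidef hinvdiff
        _ = Φ (NQ Q (tpd ξ)) := rfl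
        _ ≤ Φ (NQ Q wstar) := hopt (tpd ξ) hwpos hsum1


end
end
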